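/- arXiv:2001.05082 — 11 statements merged into one kernel-verified Lean document; each statement's English description precedes it below -/
import Mathlib

section
/- Let (Ω, ℱ, P) be a probability space, let T and n be positive integers, and let X_1, …, X_{nT} be {0,1}-valued random variables such that for each j ∈ {1, …, T} the family {X_{j+iT} : i = 0, …, n−1} is mutually independent. Let X^{(j)} = Σ_{i=0}^{n−1} X_{j+iT}, let μ_j = E[X^{(j)}], let μ = min_j μ_j, and let X = X^{(1)} + ⋯ + X^{(T)}. Then for every δ with 0 < δ < 1, P( X ≤ (1−δ) μ T ) ≤ T · exp(−δ² μ / 2). -/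
/-!
Each group sum is a sum of independent indicators, so the multiplicative Chernoff bound applies
to it: with `t = log (1 - δ)`, the mgf of an indicator of mean `p` is
`1 + (eᵗ - 1) p ≤ exp ((eᵗ - 1) p)`, and the resulting exponent `-(1 - δ) log (1 - δ) - δ` is at
most `-δ² / 2`. If the total is at most `(1 - δ) μ T`, then some group sum is at most `(1 - δ) μ`,
and a union bound over the `T` groups finishes the proof.
-/

open MeasureTheory ProbabilityTheory Real Finset

/- The inequality `u ≤ sinh u` at `u = -log (1 - δ)`, multiplied by `1 - δ`. -/
lemma neg_one_sub_mul_log_one_sub_sub_le {δ : ℝ} (h0 : 0 ≤ δ) (h1 : δ < 1) :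
    -(1 - δ) * log (1 - δ) - δ ≤ -δ ^ 2 / 2 := by
  have hpos : 0 < 1 - δ := by linarith
  have hu : 0 ≤ -log (1 - δ) := neg_nonneg.mpr (log_nonpos hpos.le (by linarith))
  have hsinh : -log (1 - δ) ≤ ((1 - δ)⁻¹ - (1 - δ)) / 2 := by
    have := self_le_sinh_iff.mpr hu
    rwa [sinh_eq, neg_neg, exp_log hpos, exp_neg, exp_log hpos] at this
  have hmul := mul_le_mul_of_nonneg_left hsinh hpos.le
  rw [mul_div_assoc', mul_sub, mul_inv_cancel₀ hpos.ne'] at hmul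
  nlinarith

namespace ProbabilityTheory

variable {Ω : Type*} [MeasurableSpace Ω] {μ : Measure Ω}

lemma integrable_of_forall_eq_zero_or_eq_one [IsFiniteMeasure μ] {X : Ω → ℝ} (hX : Measurable X)
    (h01 : ∀ ω, X ω = 0 ∨ X ω = 1) : Integrable X μ :=
  .of_bound hX.aestronglyMeasurable 1 <| ae_of_all _ fun ω => by
    rcases h01 ω with h | h <;> simp [h]

lemma exp_mul_eq_of_eq_zero_or_eq_one {x : ℝ} (t : ℝ) (hx : x = 0 ∨ x = 1) :
    exp (t * x) = 1 + (exp t - 1) * x := by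
  rcases hx with rfl | rfl <;> simp

lemma integrable_exp_mul_of_eq_zero_or_eq_one [IsFiniteMeasure μ] {X : Ω → ℝ} (hX : Measurable X)
    (h01 : ∀ ω, X ω = 0 ∨ X ω = 1) (t : ℝ) : Integrable (fun ω => exp (t * X ω)) μ :=
  ((integrable_const 1).add
    ((integrable_of_forall_eq_zero_or_eq_one hX h01).const_mul (exp t - 1))).congr
    (ae_of_all _ fun ω => (exp_mul_eq_of_eq_zero_or_eq_one t (h01 ω)).symm)

lemma mgf_le_exp_mul_integral_of_eq_zero_or_eq_one [IsProbabilityMeasure μ] {X : Ω → ℝ}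
    (hX : Measurable X) (h01 : ∀ ω, X ω = 0 ∨ X ω = 1) (t : ℝ) :
    mgf X μ t ≤ exp ((exp t - 1) * μ[X]) := by
  have hint := integrable_of_forall_eq_zero_or_eq_one (μ := μ) hX h01
  have hmgf : mgf X μ t = 1 + (exp t - 1) * μ[X] := by
    simp_rw [mgf, exp_mul_eq_of_eq_zero_or_eq_one t (h01 _)]
    rw [integral_add (integrable_const 1) (hint.const_mul _), integral_const_mul]
    simp
  rw [hmgf, add_comm]
  exact add_one_le_exp _

variable {ι : Type*} [Fintype ι] {X : ι → Ω → ℝ}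

lemma iIndepFun.mgf_sum_le_exp_mul_integral (hindep : iIndepFun X μ)
    (hmeas : ∀ i, Measurable (X i)) (h01 : ∀ i ω, X i ω = 0 ∨ X i ω = 1) (t : ℝ) :
    mgf (∑ i, X i) μ t ≤ exp ((exp t - 1) * ∫ ω, ∑ i, X i ω ∂μ) := by
  have := hindep.isProbabilityMeasure
  rw [hindep.mgf_sum hmeas, integral_finsetSum _ fun i _ =>
    integrable_of_forall_eq_zero_or_eq_one (hmeas i) (h01 i), mul_sum, exp_sum]
  exact prod_le_prod (fun i _ => mgf_nonneg) fun i _ =>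
    mgf_le_exp_mul_integral_of_eq_zero_or_eq_one (hmeas i) (h01 i) t

theorem iIndepFun.measureReal_sum_le_le_exp (hindep : iIndepFun X μ)
    (hmeas : ∀ i, Measurable (X i)) (h01 : ∀ i ω, X i ω = 0 ∨ X i ω = 1) {m δ : ℝ}
    (hm0 : 0 ≤ m) (hm : m ≤ ∫ ω, ∑ i, X i ω ∂μ) (hδ0 : 0 ≤ δ) (hδ1 : δ < 1) :
    μ.real {ω | ∑ i, X i ω ≤ (1 - δ) * m} ≤ exp (-δ ^ 2 * m / 2) := by
  have := hindep.isProbabilityMeasure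
  have hpos : 0 < 1 - δ := by linarith
  set t := log (1 - δ)
  have ht : t ≤ 0 := log_nonpos hpos.le (by linarith)
  have hint : Integrable (fun ω => exp (t * (∑ i, X i) ω)) μ :=
    hindep.integrable_exp_mul_sum hmeas fun i _ =>
      integrable_exp_mul_of_eq_zero_or_eq_one (hmeas i) (h01 i) t
  have hexp : exp t - 1 = -δ := by rw [exp_log hpos]; ring
  calc μ.real {ω | ∑ i, X i ω ≤ (1 - δ) * m}
      = μ.real {ω | (∑ i, X i) ω ≤ (1 - δ) * m} := by simp only [Finset.sum_apply]
    _ ≤ exp (-t * ((1 - δ) * m)) * mgf (∑ i, X i) μ t :=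
      measure_le_le_exp_mul_mgf _ ht hint
    _ ≤ exp (-t * ((1 - δ) * m)) * exp (-δ * m) := by
      gcongr
      refine (hindep.mgf_sum_le_exp_mul_integral hmeas h01 t).trans ?_
      rw [hexp, exp_le_exp]
      nlinarith
    _ ≤ exp (-δ ^ 2 * m / 2) := by
      rw [← exp_add, exp_le_exp]
      nlinarith [neg_one_sub_mul_log_one_sub_sub_le hδ0 hδ1]

end ProbabilityTheory

lemma measure_sum_le_mul_card_le_sum {Ω ι : Type*} [MeasurableSpace Ω] (μ : Measure Ω)
    {s : Finset ι} (hs : s.Nonempty) (f : ι → Ω → ℝ) (c : ℝ) :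
    μ {ω | ∑ j ∈ s, f j ω ≤ c * #s} ≤ ∑ j ∈ s, μ {ω | f j ω ≤ c} := by
  refine (measure_mono fun ω hω => ?_).trans (measure_biUnion_finset_le s _)
  obtain ⟨j, hj, hle⟩ := exists_le_of_sum_le hs (g := fun _ => c) <| by
    simpa [mul_comm] using hω
  exact Set.mem_biUnion hj hle

theorem stmt0_general {Ω : Type*} [MeasurableSpace Ω] (P : Measure Ω) [IsProbabilityMeasure P]
    (T n : ℕ) (hT : 0 < T)
    (X : ℕ → Ω → ℝ) (hmeas : ∀ k, Measurable (X k))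
    (h01 : ∀ k ω, X k ω = 0 ∨ X k ω = 1)
    (hindep : ∀ j ∈ Finset.Icc 1 T,
      iIndepFun (fun i : Fin n => X (j + i * T)) P)
    (μ : ℕ → ℝ)
    (hμ : ∀ j, μ j = ∫ ω, (∑ i ∈ Finset.range n, X (j + i * T) ω) ∂P)
    (μmin : ℝ)
    (hμmin : μmin = (Finset.Icc 1 T).inf' (Finset.nonempty_Icc.mpr hT) μ)
    (δ : ℝ) (hδ0 : 0 < δ) (hδ1 : δ < 1) :
    P {ω | ∑ j ∈ Finset.Icc 1 T, ∑ i ∈ Finset.range n, X (j + i * T) ω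
        ≤ (1 - δ) * μmin * T}
      ≤ ENNReal.ofReal (T * exp (-δ ^ 2 * μmin / 2)) := by
  have hμ_nonneg (j : ℕ) : 0 ≤ μ j := hμ j ▸ integral_nonneg fun ω => sum_nonneg fun i _ => by
    rcases h01 (j + i * T) ω with h | h <;> simp [h]
  have hμmin_nonneg : 0 ≤ μmin := hμmin ▸ le_inf' _ _ fun j _ => hμ_nonneg j
  have hgroup : ∀ j ∈ Icc 1 T, P {ω | ∑ i ∈ range n, X (j + i * T) ω ≤ (1 - δ) * μmin}
      ≤ ENNReal.ofReal (exp (-δ ^ 2 * μmin / 2)) := by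
    intro j hj
    rw [ENNReal.le_ofReal_iff_toReal_le (measure_ne_top _ _) (exp_pos _).le, ← measureReal_def]
    have hsum (ω : Ω) : ∑ i : Fin n, X (j + i * T) ω = ∑ i ∈ range n, X (j + i * T) ω :=
      Fin.sum_univ_eq_sum_range (fun i => X (j + i * T) ω) n
    have hmean : μmin ≤ ∫ ω, ∑ i : Fin n, X (j + i * T) ω ∂P := by
      simp only [hsum, ← hμ j]
      exact hμmin ▸ inf'_le μ hj
    simpa only [hsum] using
      (hindep j hj).measureReal_sum_le_le_exp (fun i => hmeas _) (fun i => h01 _)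
        hμmin_nonneg hmean hδ0.le hδ1
  have hcard : (#(Icc 1 T) : ℝ) = T := by simp
  have hunion := measure_sum_le_mul_card_le_sum P (nonempty_Icc.mpr hT)
    (fun j ω => ∑ i ∈ range n, X (j + i * T) ω) ((1 - δ) * μmin)
  rw [hcard] at hunion
  calc _ ≤ _ := hunion
    _ ≤ ∑ j ∈ Icc 1 T, ENNReal.ofReal (exp (-δ ^ 2 * μmin / 2)) := sum_le_sum hgroup
    _ = ENNReal.ofReal (T * exp (-δ ^ 2 * μmin / 2)) := by
      rw [sum_const, nsmul_eq_mul, ENNReal.ofReal_mul (Nat.cast_nonneg _), ENNReal.ofReal_natCast]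
      simp

/-- Chernoff-type bound for a sum of dependent indicator random variables: the `n*T`
indicators `X 1, …, X (n*T)` need only be mutually independent within each of the `T`
arithmetic-progression groups `{X (j + i*T) : i = 0, …, n-1}` (`j = 1, …, T`).
With `μ` the minimum of the group means, `P(X ≤ (1-δ)μT) ≤ T·exp(-δ²μ/2)`. -/
theorem stmt0 {Ω : Type*} [MeasurableSpace Ω] (P : Measure Ω) [IsProbabilityMeasure P]
    (T n : ℕ) (hT : 0 < T) (hn : 0 < n)
    (X : ℕ → Ω → ℝ) (hmeas : ∀ k, Measurable (X k))
    (h01 : ∀ k ω, X k ω = 0 ∨ X k ω = 1)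
    (hindep : ∀ j ∈ Finset.Icc 1 T,
      iIndepFun (fun i : Fin n => X (j + i * T)) P)
    (μ : ℕ → ℝ)
    (hμ : ∀ j, μ j = ∫ ω, (∑ i ∈ Finset.range n, X (j + i * T) ω) ∂P)
    (μmin : ℝ)
    (hμmin : μmin = (Finset.Icc 1 T).inf' (Finset.nonempty_Icc.mpr hT) μ)
    (δ : ℝ) (hδ0 : 0 < δ) (hδ1 : δ < 1) :
    P {ω | ∑ j ∈ Finset.Icc 1 T, ∑ i ∈ Finset.range n, X (j + i * T) ω
        ≤ (1 - δ) * μmin * T}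
      ≤ ENNReal.ofReal (T * exp (-δ ^ 2 * μmin / 2)) :=
  stmt0_general P T n hT X hmeas h01 hindep μ hμ μmin hμmin δ hδ0 hδ1
end

section
/- Let α ∈ (0,1) and β = 1−α. Let X_1, …, X_m (m ≥ 3) be i.i.d. random variables on a probability space with P(X_i = 1) = α and P(X_i = 0) = β. For i ∈ {1, …, m−1} define Z_i = 1 if (X_i, X_{i+1}) = (1,0) and Z_i = 0 otherwise, and let Z = Σ_{i=1}^{m−1} Z_i. Then for every δ with 0 < δ < 1, P( |Z − αβ(m−1)| > δ αβ(m−1) ) ≤ 4 · exp( −δ² αβ (m−1) / 6 ). -/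
open MeasureTheory ProbabilityTheory Real Finset

/-!
The indicators `Z_i` are not independent, but those with `i` of a fixed parity are: their pairs
`(X_i, X_{i+1})` are disjoint blocks of the independent sequence. So `Z = Z_odd + Z_even` with
each half a sum of independent Bernoulli(αβ) variables, and a deviation of `Z` by `δ·E Z` forces
a deviation of one half by `δ` times its own mean. Each half obeys the multiplicative Chernoff
bound `2·exp(-3δ²μ/8)`, obtained at `t = ±3δ/4` from `mgf ≤ exp(μ(eᵗ - 1))`. Having `3/8 > 1/3` in
the exponent absorbs the rounding of the half sizes `⌊(m-1)/2⌋` once `m ≥ 10`; for `m < 10` the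
claimed bound exceeds `1`.
-/

lemma exp_le_one_add_add_sq_div_two_add_abs_cube {x : ℝ} (hx : |x| ≤ 1) :
    exp x ≤ 1 + x + x ^ 2 / 2 + 2 / 9 * |x| ^ 3 := by
  have h := Real.exp_bound hx (n := 3) (by norm_num)
  norm_num [Finset.sum_range_succ, Nat.factorial] at h
  linarith [(abs_le.mp h).2]

lemma exp_mul_indicator_one {Ω : Type*} (A : Set Ω) (t : ℝ) (ω : Ω) :
    exp (t * A.indicator (fun _ => (1 : ℝ)) ω) = 1 + A.indicator (fun _ => exp t - 1) ω := by
  by_cases h : ω ∈ A <;> simp [h]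

section Chernoff

variable {Ω ι : Type*} [MeasurableSpace Ω] {P : Measure Ω}

lemma measure_ge_one_add_mul_le_of_mgf_le [IsFiniteMeasure P] {S : Ω → ℝ} {μ δ : ℝ} (hμ : 0 ≤ μ)
    (hδ0 : 0 ≤ δ) (hδ1 : δ ≤ 1) (hint : ∀ t, Integrable (fun ω => exp (t * S ω)) P)
    (hmgf : ∀ t, mgf S P t ≤ exp (μ * (exp t - 1))) :
    P.real {ω | (1 + δ) * μ ≤ S ω} ≤ exp (-(3 / 8) * δ ^ 2 * μ) := by
  have hexp := exp_le_one_add_add_sq_div_two_add_abs_cube (x := 3 / 4 * δ) (by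
    rw [abs_of_nonneg (by linarith)]; linarith)
  rw [abs_of_nonneg (by linarith)] at hexp
  calc P.real {ω | (1 + δ) * μ ≤ S ω}
      ≤ exp (-(3 / 4 * δ) * ((1 + δ) * μ)) * mgf S P (3 / 4 * δ) :=
        measure_ge_le_exp_mul_mgf _ (by positivity) (hint _)
    _ ≤ exp (-(3 / 4 * δ) * ((1 + δ) * μ)) * exp (μ * (exp (3 / 4 * δ) - 1)) := by
        gcongr; exact hmgf _
    _ = exp (μ * (exp (3 / 4 * δ) - 1 - 3 / 4 * δ * (1 + δ))) := by rw [← exp_add]; ring_nf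
    _ ≤ exp (-(3 / 8) * δ ^ 2 * μ) :=
        exp_le_exp.mpr (by nlinarith [mul_nonneg hμ (mul_nonneg (sq_nonneg δ) (sub_nonneg.2 hδ1))])

lemma measure_le_one_sub_mul_le_of_mgf_le [IsFiniteMeasure P] {S : Ω → ℝ} {μ δ : ℝ} (hμ : 0 ≤ μ)
    (hδ0 : 0 ≤ δ) (hδ1 : δ ≤ 1) (hint : ∀ t, Integrable (fun ω => exp (t * S ω)) P)
    (hmgf : ∀ t, mgf S P t ≤ exp (μ * (exp t - 1))) :
    P.real {ω | S ω ≤ (1 - δ) * μ} ≤ exp (-(3 / 8) * δ ^ 2 * μ) := by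
  have hexp := exp_le_one_add_add_sq_div_two_add_abs_cube (x := -(3 / 4 * δ)) (by
    rw [abs_neg, abs_of_nonneg (by linarith)]; linarith)
  rw [abs_neg, abs_of_nonneg (by linarith)] at hexp
  calc P.real {ω | S ω ≤ (1 - δ) * μ}
      ≤ exp (-(-(3 / 4 * δ)) * ((1 - δ) * μ)) * mgf S P (-(3 / 4 * δ)) :=
        measure_le_le_exp_mul_mgf _ (by linarith) (hint _)
    _ ≤ exp (-(-(3 / 4 * δ)) * ((1 - δ) * μ)) * exp (μ * (exp (-(3 / 4 * δ)) - 1)) := by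
        gcongr; exact hmgf _
    _ = exp (μ * (exp (-(3 / 4 * δ)) - 1 + 3 / 4 * δ * (1 - δ))) := by rw [← exp_add]; ring_nf
    _ ≤ exp (-(3 / 8) * δ ^ 2 * μ) :=
        exp_le_exp.mpr (by nlinarith [mul_nonneg hμ (mul_nonneg (sq_nonneg δ) (sub_nonneg.2 hδ1))])

lemma measure_abs_sub_gt_le_of_mgf_le [IsFiniteMeasure P] {S : Ω → ℝ} {μ δ : ℝ} (hμ : 0 ≤ μ)
    (hδ0 : 0 ≤ δ) (hδ1 : δ ≤ 1) (hint : ∀ t, Integrable (fun ω => exp (t * S ω)) P)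
    (hmgf : ∀ t, mgf S P t ≤ exp (μ * (exp t - 1))) :
    P.real {ω | δ * μ < |S ω - μ|} ≤ 2 * exp (-(3 / 8) * δ ^ 2 * μ) := by
  have hsub : {ω | δ * μ < |S ω - μ|} ⊆ {ω | (1 + δ) * μ ≤ S ω} ∪ {ω | S ω ≤ (1 - δ) * μ} := by
    intro ω hω
    simp only [Set.mem_ofPred_eq, Set.mem_union] at hω ⊢
    rcases lt_abs.mp hω with h | h
    · left; linarith
    · right; linarith
  calc P.real {ω | δ * μ < |S ω - μ|}
      ≤ P.real {ω | (1 + δ) * μ ≤ S ω} + P.real {ω | S ω ≤ (1 - δ) * μ} :=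
        (measureReal_mono hsub).trans (measureReal_union_le _ _)
    _ ≤ 2 * exp (-(3 / 8) * δ ^ 2 * μ) := by
        linarith [measure_ge_one_add_mul_le_of_mgf_le hμ hδ0 hδ1 hint hmgf,
          measure_le_one_sub_mul_le_of_mgf_le hμ hδ0 hδ1 hint hmgf]

lemma integrable_exp_mul_indicator_one [IsFiniteMeasure P] {A : Set Ω} (hA : MeasurableSet A)
    (t : ℝ) :
    Integrable (fun ω => exp (t * A.indicator (fun _ => (1 : ℝ)) ω)) P := by
  simp_rw [exp_mul_indicator_one]
  exact (integrable_const 1).add ((integrable_const _).indicator hA)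

lemma mgf_indicator_one [IsProbabilityMeasure P] {A : Set Ω} (hA : MeasurableSet A) (t : ℝ) :
    mgf (A.indicator fun _ => (1 : ℝ)) P t = 1 + P.real A * (exp t - 1) := by
  simp_rw [mgf, exp_mul_indicator_one]
  rw [integral_add (integrable_const 1) ((integrable_const _).indicator hA), integral_const,
    integral_indicator_const _ hA]
  simp [mul_comm]

variable [IsProbabilityMeasure P] [Fintype ι] {A : ι → Set Ω}

lemma mgf_sum_indicator_le (hind : iIndepSet A P) (hA : ∀ i, MeasurableSet (A i)) (t : ℝ) :
    mgf (∑ i, (A i).indicator fun _ => (1 : ℝ)) P t ≤ exp ((∑ i, P.real (A i)) * (exp t - 1)) := by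
  rw [hind.iIndepFun_indicator.mgf_sum (fun i => measurable_const.indicator (hA i)), sum_mul,
    exp_sum]
  refine prod_le_prod (fun i _ => ?_) (fun i _ => ?_) <;> rw [mgf_indicator_one (hA i)]
  · nlinarith [exp_pos t, measureReal_nonneg (μ := P) (s := A i),
      measureReal_le_one (μ := P) (s := A i)]
  · linarith [add_one_le_exp (P.real (A i) * (exp t - 1))]

lemma measure_abs_sum_indicator_sub_gt_le (hind : iIndepSet A P) (hA : ∀ i, MeasurableSet (A i))
    {δ : ℝ} (hδ0 : 0 ≤ δ) (hδ1 : δ ≤ 1) :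
    P.real {ω | δ * ∑ i, P.real (A i) <
        |∑ i, (A i).indicator (fun _ => (1 : ℝ)) ω - ∑ i, P.real (A i)|}
      ≤ 2 * exp (-(3 / 8) * δ ^ 2 * ∑ i, P.real (A i)) := by
  have hint : ∀ t, Integrable (fun ω => exp (t * ∑ i, (A i).indicator (fun _ => (1 : ℝ)) ω)) P :=
    fun t => by
      simpa only [Finset.sum_apply] using hind.iIndepFun_indicator.integrable_exp_mul_sum
        (fun i => measurable_const.indicator (hA i))
        (fun i _ => integrable_exp_mul_indicator_one (hA i) t) (s := univ)
  refine measure_abs_sub_gt_le_of_mgf_le (sum_nonneg fun i _ => measureReal_nonneg) hδ0 hδ1 hint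
    fun t => ?_
  simpa only [← Finset.sum_apply] using mgf_sum_indicator_le hind hA t

end Chernoff

section PairEvents

def pairEvent {Ω : Type*} (X : ℕ → Ω → ℝ) (i : ℕ) : Set Ω := X i ⁻¹' {1} ∩ X (i + 1) ⁻¹' {0}

variable {Ω : Type*} {X : ℕ → Ω → ℝ}

lemma indicator_pairEvent_apply (i : ℕ) (ω : Ω) :
    (pairEvent X i).indicator (fun _ => (1 : ℝ)) ω =
      if X i ω = 1 ∧ X (i + 1) ω = 0 then 1 else 0 := by
  by_cases h : X i ω = 1 ∧ X (i + 1) ω = 0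
  · rw [if_pos h]; exact Set.indicator_of_mem (s := pairEvent X i) h _
  · rw [if_neg h]; exact Set.indicator_of_notMem (s := pairEvent X i) h _

variable [MeasurableSpace Ω] {P : Measure Ω} {m : ℕ}

lemma measure_biInter_preimage_eq_prod (hind : iIndepFun (fun i : Fin m => X (i + 1)) P)
    {C : Finset ℕ} (hC : C ⊆ Icc 1 m) {B : ℕ → Set ℝ} (hB : ∀ j, MeasurableSet (B j)) :
    P (⋂ j ∈ C, X j ⁻¹' B j) = ∏ j ∈ C, P (X j ⁻¹' B j) := by
  have hC' : ({i | (i : ℕ) + 1 ∈ C} : Finset (Fin m)).image (fun i : Fin m => (i : ℕ) + 1) = C :=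
      by
    ext j
    simp only [mem_image, mem_filter, mem_univ, true_and]
    refine ⟨fun ⟨i, hi, hij⟩ => hij ▸ hi, fun hj => ?_⟩
    have := mem_Icc.mp (hC hj)
    exact ⟨⟨j - 1, by omega⟩, by simpa [Nat.sub_add_cancel this.1], by simp; omega⟩
  rw [← hC', prod_image fun i _ j _ h => Fin.ext (by simpa using h), set_biInter_finset_image]
  exact hind.meas_biInter fun i _ => ⟨B (i + 1), hB _, rfl⟩

lemma measurableSet_pairEvent (hX : ∀ i, Measurable (X i)) (i : ℕ) :
    MeasurableSet (pairEvent X i) :=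
  (hX i (measurableSet_singleton 1)).inter (hX (i + 1) (measurableSet_singleton 0))

variable {α β : ℝ}

lemma measure_biInter_pairEvent (hind : iIndepFun (fun i : Fin m => X (i + 1)) P) (hα : 0 ≤ α)
    (h1 : ∀ i ∈ Icc 1 m, P {ω | X i ω = 1} = ENNReal.ofReal α)
    (h0 : ∀ i ∈ Icc 1 m, P {ω | X i ω = 0} = ENNReal.ofReal β)
    {T : Finset ℕ} (hT : T ⊆ Icc 1 (m - 1)) (hsep : ∀ i ∈ T, i + 1 ∉ T) :
    P (⋂ i ∈ T, pairEvent X i) = ENNReal.ofReal (α * β) ^ #T := by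
  let b : ℕ → ℝ := fun j => if j ∈ T then 1 else 0
  have hsplit : ⋂ i ∈ T, pairEvent X i = ⋂ j ∈ T ∪ T.image (· + 1), X j ⁻¹' {b j} := by
    ext ω
    simp only [pairEvent, b, Set.mem_iInter, Set.mem_inter_iff, Set.mem_preimage,
      Set.mem_singleton_iff, mem_union, mem_image, or_imp, forall_and, forall_exists_index,
      and_imp, forall_apply_eq_imp_iff₂]
    exact and_congr (forall₂_congr fun i hi => by rw [if_pos hi])
      (forall₂_congr fun i hi => by rw [if_neg (hsep i hi)])
  have hdisj : Disjoint T (T.image (· + 1)) := by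
    simpa [disjoint_right] using hsep
  have hC : T ∪ T.image (· + 1) ⊆ Icc 1 m := by
    intro j hj
    rcases mem_union.mp hj with hj | hj
    · have := mem_Icc.mp (hT hj); simp only [mem_Icc]; omega
    · obtain ⟨i, hi, rfl⟩ := mem_image.mp hj
      have := mem_Icc.mp (hT hi); simp only [mem_Icc]; omega
  rw [hsplit, measure_biInter_preimage_eq_prod hind hC (fun _ => measurableSet_singleton _),
    prod_union hdisj, prod_image (by simp), ← prod_mul_distrib, ← prod_const]
  refine prod_congr rfl fun i hi => ?_
  have hi' := mem_Icc.mp (hT hi)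
  have hb1 : b i = 1 := if_pos hi
  have hb0 : b (i + 1) = 0 := if_neg (hsep i hi)
  rw [ENNReal.ofReal_mul hα, hb1, hb0]
  exact congr_arg₂ _ (h1 i (by simp; omega)) (h0 (i + 1) (by simp; omega))

lemma measure_pairEvent (hind : iIndepFun (fun i : Fin m => X (i + 1)) P) (hα : 0 ≤ α)
    (h1 : ∀ i ∈ Icc 1 m, P {ω | X i ω = 1} = ENNReal.ofReal α)
    (h0 : ∀ i ∈ Icc 1 m, P {ω | X i ω = 0} = ENNReal.ofReal β) {i : ℕ} (hi : i ∈ Icc 1 (m - 1)) :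
    P (pairEvent X i) = ENNReal.ofReal (α * β) := by
  simpa using measure_biInter_pairEvent hind hα h1 h0 (T := {i}) (by simpa using hi) (by simp)

lemma iIndepSet_pairEvent (hX : ∀ i, Measurable (X i))
    (hind : iIndepFun (fun i : Fin m => X (i + 1)) P) (hα : 0 ≤ α)
    (h1 : ∀ i ∈ Icc 1 m, P {ω | X i ω = 1} = ENNReal.ofReal α)
    (h0 : ∀ i ∈ Icc 1 m, P {ω | X i ω = 0} = ENNReal.ofReal β)
    {T : Finset ℕ} (hT : T ⊆ Icc 1 (m - 1)) (hsep : ∀ i ∈ T, i + 1 ∉ T) :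
    iIndepSet (fun i : T => pairEvent X i) P := by
  refine (iIndepSet_iff_meas_biInter fun i : T => measurableSet_pairEvent hX i).2 fun u => ?_
  have hu : u.image Subtype.val ⊆ T := fun x hx => by
    obtain ⟨i, -, rfl⟩ := mem_image.mp hx
    exact i.2
  rw [← set_biInter_finset_image, measure_biInter_pairEvent hind hα h1 h0 (hu.trans hT)
    fun i hi => notMem_mono hu (hsep i (hu hi)), card_image_of_injective _ Subtype.val_injective,
    ← prod_const]
  exact prod_congr rfl fun i _ => (measure_pairEvent hind hα h1 h0 (hT i.2)).symm

lemma measure_abs_sum_pairEvent_sub_gt_le [IsProbabilityMeasure P] (hX : ∀ i, Measurable (X i))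
    (hind : iIndepFun (fun i : Fin m => X (i + 1)) P) (hα : 0 ≤ α) (hβ : 0 ≤ β)
    (h1 : ∀ i ∈ Icc 1 m, P {ω | X i ω = 1} = ENNReal.ofReal α)
    (h0 : ∀ i ∈ Icc 1 m, P {ω | X i ω = 0} = ENNReal.ofReal β)
    {T : Finset ℕ} (hT : T ⊆ Icc 1 (m - 1)) (hsep : ∀ i ∈ T, i + 1 ∉ T)
    {δ : ℝ} (hδ0 : 0 ≤ δ) (hδ1 : δ ≤ 1) :
    P.real {ω | δ * (α * β * #T) <
        |∑ i ∈ T, (pairEvent X i).indicator (fun _ => (1 : ℝ)) ω - α * β * #T|}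
      ≤ 2 * exp (-(3 / 8) * δ ^ 2 * (α * β * #T)) := by
  have hmean : ∑ i : T, P.real (pairEvent X i) = α * β * #T := by
    simp_rw [measureReal_def, measure_pairEvent hind hα h1 h0 (hT (coe_mem _)),
      ENNReal.toReal_ofReal (mul_nonneg hα hβ), sum_const, card_univ, Fintype.card_coe]
    ring
  have := measure_abs_sum_indicator_sub_gt_le (iIndepSet_pairEvent hX hind hα h1 h0 hT hsep)
    (fun i => measurableSet_pairEvent hX i) hδ0 hδ1
  rw [hmean] at this
  convert this using 7 with ω
  exact (sum_coe_sort T fun i => (pairEvent X i).indicator (fun _ => (1 : ℝ)) ω).symm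

end PairEvents

lemma measureReal_abs_add_sub_gt_le {Ω : Type*} [MeasurableSpace Ω] {P : Measure Ω}
    [IsFiniteMeasure P] (S₁ S₂ : Ω → ℝ) (a b δ : ℝ) :
    P.real {ω | δ * (a + b) < |S₁ ω + S₂ ω - (a + b)|}
      ≤ P.real {ω | δ * a < |S₁ ω - a|} + P.real {ω | δ * b < |S₂ ω - b|} := by
  refine (measureReal_mono fun ω hω => ?_).trans (measureReal_union_le _ _)
  by_contra hc
  simp only [Set.mem_union, Set.mem_ofPred_eq, not_or, not_lt] at hc hω
  have htri : |S₁ ω + S₂ ω - (a + b)| ≤ |S₁ ω - a| + |S₂ ω - b| := by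
    rw [show S₁ ω + S₂ ω - (a + b) = (S₁ ω - a) + (S₂ ω - b) by ring]
    exact abs_add_le _ _
  linarith

lemma card_filter_two_dvd_Icc (n : ℕ) : #{i ∈ Icc 1 n | 2 ∣ i} = n / 2 :=
  Nat.Ioc_filter_dvd_card_eq_div n 2

lemma card_filter_not_two_dvd_Icc (n : ℕ) : #{i ∈ Icc 1 n | ¬2 ∣ i} = n - n / 2 := by
  have := card_filter_add_card_filter_not (s := Icc 1 n) (2 ∣ ·)
  rw [Nat.card_Icc, card_filter_two_dvd_Icc] at this
  omega

lemma one_le_four_mul_exp_of_lt_ten {δ α β : ℝ} (h0 : 0 ≤ δ ^ 2 * (α * β))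
    (h1 : δ ^ 2 * (α * β) ≤ 1 / 4) {m : ℕ} (hm : m < 10) :
    1 ≤ 4 * exp (-δ ^ 2 * α * β * ((m : ℝ) - 1) / 6) := by
  have hm' : (m : ℝ) - 1 ≤ 8 := by
    have : (m : ℝ) ≤ 9 := by exact_mod_cast Nat.le_of_lt_succ hm
    linarith
  nlinarith [add_one_le_exp (-δ ^ 2 * α * β * ((m : ℝ) - 1) / 6),
    mul_nonneg h0 (sub_nonneg.2 hm')]

lemma exp_half_exponent_le {δ α β : ℝ} (hαβ : 0 ≤ α * β) {m n : ℕ} (hm : 10 ≤ m)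
    (hn : (m - 1) / 2 ≤ n) :
    exp (-(3 / 8) * δ ^ 2 * (α * β * n)) ≤ exp (-δ ^ 2 * α * β * ((m : ℝ) - 1) / 6) := by
  have hn' : 4 * ((m : ℝ) - 1) ≤ 9 * n := by
    have := (Nat.cast_le (α := ℝ)).2 (show 4 * (m - 1) ≤ 9 * n by omega)
    push_cast [Nat.cast_sub (by omega : 1 ≤ m)] at this
    linarith
  exact exp_le_exp.2
    (by nlinarith [mul_nonneg (mul_nonneg (sq_nonneg δ) hαβ) (sub_nonneg.2 hn')])

theorem stmt1_general {Ω : Type*} [MeasurableSpace Ω] (P : Measure Ω) [IsProbabilityMeasure P]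
    (α β : ℝ) (hα0 : 0 < α) (hα1 : α < 1) (hβ : β = 1 - α)
    (m : ℕ)
    (X : ℕ → Ω → ℝ) (hmeas : ∀ i, Measurable (X i))
    (hindep : iIndepFun
      (fun i : Fin m => X (i + 1)) P)
    (h1 : ∀ i ∈ Finset.Icc 1 m, P {ω | X i ω = 1} = ENNReal.ofReal α)
    (h0 : ∀ i ∈ Finset.Icc 1 m, P {ω | X i ω = 0} = ENNReal.ofReal β)
    (Z : Ω → ℝ)
    (hZ : ∀ ω, Z ω = ∑ i ∈ Finset.Icc 1 (m - 1),
      if X i ω = 1 ∧ X (i + 1) ω = 0 then (1 : ℝ) else 0)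
    (δ : ℝ) (hδ0 : 0 < δ) (hδ1 : δ < 1) :
    P {ω | |Z ω - α * β * ((m : ℝ) - 1)| > δ * (α * β * ((m : ℝ) - 1))}
      ≤ ENNReal.ofReal (4 * exp (-δ ^ 2 * α * β * ((m : ℝ) - 1) / 6)) := by
  have hβ0 : 0 ≤ β := by linarith
  have hαβ0 : 0 ≤ α * β := mul_nonneg hα0.le hβ0
  rcases lt_or_ge m 10 with hm | hm
  · refine prob_le_one.trans (ENNReal.one_le_ofReal.2 (one_le_four_mul_exp_of_lt_ten
      (by positivity) ?_ hm))
    rw [hβ]; nlinarith [sq_nonneg (α - 1 / 2), pow_le_one₀ hδ0.le hδ1.le (n := 2)]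
  have hO := card_filter_not_two_dvd_Icc (m - 1)
  have hE := card_filter_two_dvd_Icc (m - 1)
  set O := {i ∈ Icc 1 (m - 1) | ¬2 ∣ i}
  set E := {i ∈ Icc 1 (m - 1) | 2 ∣ i}
  have hmean : α * β * ((m : ℝ) - 1) = α * β * #O + α * β * #E := by
    rw [← mul_add, ← Nat.cast_add, show #O + #E = m - 1 by omega,
      Nat.cast_sub (by omega : 1 ≤ m), Nat.cast_one]
  have hsplit : ∀ ω, Z ω = ∑ i ∈ O, (pairEvent X i).indicator (fun _ => (1 : ℝ)) ω +
      ∑ i ∈ E, (pairEvent X i).indicator (fun _ => (1 : ℝ)) ω := fun ω => by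
    simp_rw [hZ, ← indicator_pairEvent_apply]
    exact (sum_filter_not_add_sum_filter _ _ _).symm
  simp_rw [hsplit, hmean, gt_iff_lt]
  rw [← ofReal_measureReal]
  refine ENNReal.ofReal_le_ofReal ((measureReal_abs_add_sub_gt_le _ _ _ _ _).trans ?_)
  have hdevO := measure_abs_sum_pairEvent_sub_gt_le hmeas hindep hα0.le hβ0 h1 h0
    (T := O) (filter_subset _ _) (fun i hi hi' => by simp only [O, mem_filter] at hi hi'; omega)
    hδ0.le hδ1.le
  have hdevE := measure_abs_sum_pairEvent_sub_gt_le hmeas hindep hα0.le hβ0 h1 h0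
    (T := E) (filter_subset _ _) (fun i hi hi' => by simp only [E, mem_filter] at hi hi'; omega)
    hδ0.le hδ1.le
  linarith [exp_half_exponent_le (δ := δ) hαβ0 hm (n := #O) (by omega),
    exp_half_exponent_le (δ := δ) hαβ0 hm (n := #E) (by omega)]

/-- Concentration of the number `Z` of (selfish, honest) key-block pairs among `m` i.i.d.
key blocks (`X i = 1` selfish w.p. `α`, `X i = 0` honest w.p. `β = 1-α`):
`P(|Z - αβ(m-1)| > δαβ(m-1)) ≤ 4·exp(-δ²αβ(m-1)/6)`. -/
theorem stmt1 {Ω : Type*} [MeasurableSpace Ω] (P : Measure Ω) [IsProbabilityMeasure P]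
    (α β : ℝ) (hα0 : 0 < α) (hα1 : α < 1) (hβ : β = 1 - α)
    (m : ℕ) (hm : 3 ≤ m)
    (X : ℕ → Ω → ℝ) (hmeas : ∀ i, Measurable (X i))
    (hindep : iIndepFun
      (fun i : Fin m => X (i + 1)) P)
    (h1 : ∀ i ∈ Finset.Icc 1 m, P {ω | X i ω = 1} = ENNReal.ofReal α)
    (h0 : ∀ i ∈ Finset.Icc 1 m, P {ω | X i ω = 0} = ENNReal.ofReal β)
    (Z : Ω → ℝ)
    (hZ : ∀ ω, Z ω = ∑ i ∈ Finset.Icc 1 (m - 1),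
      if X i ω = 1 ∧ X (i + 1) ω = 0 then (1 : ℝ) else 0)
    (δ : ℝ) (hδ0 : 0 < δ) (hδ1 : δ < 1) :
    P {ω | |Z ω - α * β * ((m : ℝ) - 1)| > δ * (α * β * ((m : ℝ) - 1))}
      ≤ ENNReal.ofReal (4 * exp (-δ ^ 2 * α * β * ((m : ℝ) - 1) / 6)) :=
  stmt1_general P α β hα0 hα1 hβ m X hmeas hindep h1 h0 Z hZ δ hδ0 hδ1
end

section
/- Let α ∈ (0,1), β = 1−α, f > 0, r ∈ [0,1], ρ ∈ [0,1], v > 0, R_t > 0, with αβρ < 1. Let (X_i)_{i≥1} be i.i.d. with P(X_i = 1) = α, P(X_i = 0) = β, define Z_i = 1 if (X_i, X_{i+1}) = (1,0) and Z_i = 0 otherwise, and let (Y_i)_{i≥1} be i.i.d. exponential random variables with rate f, independent of (X_i). For m ≥ 2 define u_m = [ Σ_{i=1}^{m−1} ( α v Y_i R_t − r ρ v Z_i Y_i R_t ) ] / [ Σ_{i=1}^{m−1} ( v Y_i R_t − ρ v Z_i Y_i R_t ) ]. Then u_m converges almost surely to (α − r α β ρ) / (1 − α β ρ) as m → ∞.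 -/
/-!
Up to the common factor `v R_t`, `u_m` is the ratio of the averages of `α Y_i - r ρ Z_i Y_i` and
`Y_i - ρ Z_i Y_i`. The `Y_i` are i.i.d. with mean `1/f`, so their averages converge a.s. by the
strong law. The products `Z_i Y_i` are identically distributed with mean `α β / f` but only
1-dependent: `Z_i Y_i` and `Z_j Y_j` are independent once `|i - j| ≥ 2`. The even-indexed and the
odd-indexed products therefore each form a pairwise independent family, the strong law applies to
both, and their averages combine into the average of all of them. The ratio tends to
`(α/f - r ρ α β/f) / (1/f - ρ α β/f)`, whose denominator is nonzero because `α β ρ < 1`.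
-/

open MeasureTheory ProbabilityTheory Finset Filter Topology Real

lemma exponentialPDFReal_mul_self (r x : ℝ) :
    exponentialPDFReal r x * x =
      (Set.Ioi 0).indicator (fun t ↦ r * (t ^ ((2 : ℝ) - 1) * exp (-(r * t)))) x := by
  rcases lt_or_ge 0 x with hx | hx
  · rw [Set.indicator_of_mem (Set.mem_Ioi.2 hx), show (2 : ℝ) - 1 = 1 by norm_num]
    simp only [exponentialPDFReal, gammaPDFReal, hx.le, ↓reduceIte, rpow_one, Gamma_one, div_one,
      sub_self, rpow_zero, mul_one]
    ring
  · rcases hx.lt_or_eq with hx | rfl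
    · simp [exponentialPDFReal, gammaPDFReal, not_le.2 hx, Set.indicator_of_notMem, hx.le]
    · simp

lemma integral_id_expMeasure {r : ℝ} (hr : 0 < r) : ∫ x, x ∂expMeasure r = r⁻¹ := by
  change ∫ x, x ∂volume.withDensity (fun x ↦ ENNReal.ofReal (exponentialPDFReal r x)) = r⁻¹
  rw [integral_withDensity_eq_integral_toReal_smul (by fun_prop)
    (ae_of_all _ fun _ ↦ ENNReal.ofReal_lt_top)]
  simp_rw [ENNReal.toReal_ofReal (exponentialPDFReal_nonneg hr _), smul_eq_mul,
    exponentialPDFReal_mul_self, integral_indicator measurableSet_Ioi, integral_const_mul,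
    integral_rpow_mul_exp_neg_mul_Ioi two_pos hr, Gamma_two, rpow_two]
  field_simp

lemma integrable_id_expMeasure {r : ℝ} (hr : 0 < r) : Integrable (fun x ↦ x) (expMeasure r) :=
  .of_integral_ne_zero (by rw [integral_id_expMeasure hr]; positivity)

lemma identDistrib_of_ae_eq_zero_or_one {Ω Ω' : Type*} [MeasurableSpace Ω] [MeasurableSpace Ω']
    {μ : Measure Ω} {ν : Measure Ω'} [IsProbabilityMeasure μ] [IsProbabilityMeasure ν]
    {Z : Ω → ℝ} {Z' : Ω' → ℝ} (hZ : AEMeasurable Z μ) (hZ' : AEMeasurable Z' ν)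
    (h01 : ∀ᵐ ω ∂μ, Z ω = 0 ∨ Z ω = 1) (h01' : ∀ᵐ ω ∂ν, Z' ω = 0 ∨ Z' ω = 1)
    (h : μ {ω | Z ω = 1} = ν {ω | Z' ω = 1}) : IdentDistrib Z Z' μ ν := by
  change μ (Z ⁻¹' {1}) = ν (Z' ⁻¹' {1}) at h
  have hμ := (Measure.ae_eq_or_eq_iff_map_eq_dirac_add_dirac hZ zero_ne_one).1 h01
  have hν := (Measure.ae_eq_or_eq_iff_map_eq_dirac_add_dirac hZ' zero_ne_one).1 h01'
  have h0 : μ (Z ⁻¹' {0}) = ν (Z' ⁻¹' {0}) := by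
    have hμ1 := congrArg (· Set.univ) hμ
    have hν1 := congrArg (· Set.univ) hν
    simp only [Measure.map_apply_of_aemeasurable hZ MeasurableSet.univ,
      Measure.map_apply_of_aemeasurable hZ' MeasurableSet.univ, Set.preimage_univ, measure_univ,
      Measure.coe_add, Measure.coe_smul, Pi.add_apply, Pi.smul_apply,
      smul_eq_mul, Measure.dirac_apply_of_mem (Set.mem_univ _), mul_one] at hμ1 hν1
    rw [h] at hμ1
    exact (ENNReal.add_left_inj (measure_ne_top _ _)).1 (hμ1.symm.trans hν1)
  exact ⟨hZ, hZ', by rw [hμ, hν, h0, h]⟩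

lemma ProbabilityTheory.iIndepFun.indepFun_prodMk₃_prodMk₃ {Ω ι β : Type*} [MeasurableSpace Ω]
    [MeasurableSpace β] [DecidableEq ι] {μ : Measure Ω} {f : ι → Ω → β} (h : iIndepFun f μ)
    (hf : ∀ i, Measurable (f i)) {i₁ i₂ i₃ j₁ j₂ j₃ : ι}
    (hd : Disjoint ({i₁, i₂, i₃} : Finset ι) {j₁, j₂, j₃}) :
    IndepFun (fun ω ↦ (f i₁ ω, f i₂ ω, f i₃ ω)) (fun ω ↦ (f j₁ ω, f j₂ ω, f j₃ ω)) μ := by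
  let restrict₃ (a b c : ι) (x : ({a, b, c} : Finset ι) → β) : β × β × β :=
    (x ⟨a, by simp⟩, x ⟨b, by simp⟩, x ⟨c, by simp⟩)
  have h_meas (a b c : ι) : Measurable (restrict₃ a b c) := by fun_prop
  exact (h.indepFun_finset _ _ hd hf).comp (h_meas i₁ i₂ i₃) (h_meas j₁ j₂ j₃)

lemma tendsto_of_tendsto_even_of_tendsto_odd {α : Type*} {u : ℕ → α} {l : Filter α}
    (he : Tendsto (fun k ↦ u (2 * k)) atTop l) (ho : Tendsto (fun k ↦ u (2 * k + 1)) atTop l) :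
    Tendsto u atTop l := by
  intro s hs
  obtain ⟨N₁, h₁⟩ := eventually_atTop.1 (he hs)
  obtain ⟨N₂, h₂⟩ := eventually_atTop.1 (ho hs)
  refine eventually_atTop.2 ⟨2 * (N₁ + N₂), fun n hn ↦ ?_⟩
  obtain ⟨k, rfl | rfl⟩ := Nat.even_or_odd' n
  exacts [h₁ k (by omega), h₂ k (by omega)]

lemma sum_range_two_mul {M : Type*} [AddCommMonoid M] (g : ℕ → M) (n : ℕ) :
    ∑ i ∈ range (2 * n), g i = ∑ k ∈ range n, g (2 * k) + ∑ k ∈ range n, g (2 * k + 1) := by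
  induction n with
  | zero => simp
  | succ n ih =>
    rw [Nat.mul_succ, sum_range_succ, sum_range_succ, ih, sum_range_succ, sum_range_succ]
    abel

lemma tendsto_natCast_div_two_mul_add_one :
    Tendsto (fun k : ℕ ↦ (k : ℝ) / (2 * k + 1)) atTop (𝓝 (1 / 2)) := by
  have h := (tendsto_natCast_div_add_atTop (1 / 2 : ℝ)).const_mul (1 / 2)
  rw [mul_one] at h
  refine h.congr fun k ↦ ?_
  field_simp

lemma tendsto_average_of_even_of_odd (g : ℕ → ℝ) {m : ℝ}
    (he : Tendsto (fun n : ℕ ↦ (∑ k ∈ range n, g (2 * k)) / n) atTop (𝓝 m))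
    (ho : Tendsto (fun n : ℕ ↦ (∑ k ∈ range n, g (2 * k + 1)) / n) atTop (𝓝 m)) :
    Tendsto (fun n : ℕ ↦ (∑ i ∈ range n, g i) / n) atTop (𝓝 m) := by
  refine tendsto_of_tendsto_even_of_tendsto_odd ?_ ?_
  · have h := (he.add ho).div_const 2
    rw [add_self_div_two] at h
    refine h.congr' ((eventually_ne_atTop 0).mono fun k hk ↦ ?_)
    simp only [sum_range_two_mul]
    push_cast
    field_simp
  · have he' := he.comp (tendsto_add_atTop_nat 1)
    have hc := tendsto_natCast_div_two_mul_add_one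
    have h := (((tendsto_const_nhds (x := (1 : ℝ))).sub hc).mul he').add (hc.mul ho)
    rw [show (1 - 1 / 2) * m + 1 / 2 * m = m by ring] at h
    refine h.congr' ((eventually_ne_atTop 0).mono fun k hk ↦ ?_)
    simp only [sum_range_succ, sum_range_two_mul, Function.comp_apply]
    push_cast
    field_simp
    ring

theorem strong_law_ae_of_indepFun_of_add_two_le {Ω : Type*} [MeasurableSpace Ω] {μ : Measure Ω}
    (W : ℕ → Ω → ℝ) (hint : Integrable (W 0) μ)
    (hindep : ∀ i j, i + 2 ≤ j → IndepFun (W i) (W j) μ)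
    (hident : ∀ i, IdentDistrib (W i) (W 0) μ μ) :
    ∀ᵐ ω ∂μ, Tendsto (fun n : ℕ ↦ (∑ i ∈ range n, W i ω) / n) atTop (𝓝 μ[W 0]) := by
  have h_sub (a : ℕ) : ∀ᵐ ω ∂μ,
      Tendsto (fun n : ℕ ↦ (∑ k ∈ range n, W (2 * k + a) ω) / n) atTop (𝓝 μ[W 0]) := by
    have h_pair : Pairwise (Function.onFun (IndepFun · · μ) fun k ↦ W (2 * k + a)) := by
      intro k l hkl
      rcases hkl.lt_or_gt with hkl | hkl
      exacts [hindep _ _ (by omega), (hindep _ _ (by omega)).symm]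
    have h := strong_law_ae_real (fun k ↦ W (2 * k + a)) ((hident _).integrable_iff.2 hint) h_pair
      fun k ↦ (hident _).trans (hident _).symm
    rwa [(hident _).integral_eq] at h
  filter_upwards [h_sub 0, h_sub 1] with ω h₀ h₁
  exact tendsto_average_of_even_of_odd _ h₀ h₁

lemma tendsto_average_linearCombination {y w : ℕ → ℝ} {a b : ℝ}
    (hy : Tendsto (fun n : ℕ ↦ (∑ i ∈ range n, y i) / n) atTop (𝓝 a))
    (hw : Tendsto (fun n : ℕ ↦ (∑ i ∈ range n, w i) / n) atTop (𝓝 b)) (c d : ℝ) :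
    Tendsto (fun n : ℕ ↦ (∑ i ∈ range n, (c * y i - d * w i)) / n) atTop (𝓝 (c * a - d * b)) := by
  refine ((hy.const_mul c).sub (hw.const_mul d)).congr fun n ↦ ?_
  rw [sum_sub_distrib, ← mul_sum, ← mul_sum]
  ring

lemma tendsto_sum_div_sum_of_tendsto_average {p q : ℕ → ℝ} {a b : ℝ}
    (hp : Tendsto (fun n : ℕ ↦ (∑ i ∈ range n, p i) / n) atTop (𝓝 a))
    (hq : Tendsto (fun n : ℕ ↦ (∑ i ∈ range n, q i) / n) atTop (𝓝 b)) (hb : b ≠ 0) :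
    Tendsto (fun n ↦ (∑ i ∈ range n, p i) / ∑ i ∈ range n, q i) atTop (𝓝 (a / b)) :=
  (hp.div hq hb).congr' <| (eventually_ne_atTop 0).mono fun _ hn ↦
    div_div_div_cancel_right₀ (Nat.cast_ne_zero.2 hn) _ _

lemma sum_Icc_one_eq_sum_range {M : Type*} [AddCommMonoid M] (g : ℕ → M) (n : ℕ) :
    ∑ i ∈ Icc 1 n, g i = ∑ k ∈ range n, g (k + 1) := by
  rw [← Nat.Ico_zero_eq_range, sum_Ico_add', zero_add, Ico_add_one_right_eq_Icc]

section KeyBlocks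

variable {Ω : Type*} [MeasurableSpace Ω] {P : Measure Ω} {X Y : ℕ → Ω → ℝ}

def keyBlockData (X Y : ℕ → Ω → ℝ) : ℕ ⊕ ℕ → Ω → ℝ :=
  Sum.elim (fun i ↦ X (i + 1)) (fun i ↦ Y (i + 1))

noncomputable def selfishThenHonest (p : ℝ × ℝ) : ℝ := if p.1 = 1 ∧ p.2 = 0 then 1 else 0

@[fun_prop]
lemma measurable_selfishThenHonest : Measurable selfishThenHonest :=
  Measurable.ite ((measurableSet_singleton 1).prod (measurableSet_singleton 0))
    measurable_const measurable_const

lemma selfishThenHonest_eq_zero_or_one (p : ℝ × ℝ) :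
    selfishThenHonest p = 0 ∨ selfishThenHonest p = 1 := by
  unfold selfishThenHonest
  split_ifs <;> simp

/-- This is `Z (i + 1) * Y (i + 1)`, re-indexed to start at `0`. -/
noncomputable def withheldEpochLength (X Y : ℕ → Ω → ℝ) (i : ℕ) (ω : Ω) : ℝ :=
  selfishThenHonest (X (i + 1) ω, X (i + 2) ω) * Y (i + 1) ω

lemma measure_selfishThenHonest_eq_one (hindep : iIndepFun (keyBlockData X Y) P) (i : ℕ) :
    P {ω | selfishThenHonest (X (i + 1) ω, X (i + 2) ω) = 1} =
      P {ω | X (i + 1) ω = 1} * P {ω | X (i + 2) ω = 0} := by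
  have hpre : {ω | selfishThenHonest (X (i + 1) ω, X (i + 2) ω) = 1} =
      X (i + 1) ⁻¹' {1} ∩ X (i + 2) ⁻¹' {0} := by
    ext ω
    simp [selfishThenHonest]
  rw [hpre]
  exact (hindep.indepFun (i := .inl i) (j := .inl (i + 1)) (by simp)).measure_inter_preimage_eq_mul
    _ _ (measurableSet_singleton 1) (measurableSet_singleton 0)

lemma measurable_selfishThenHonest_comp (hmeas : ∀ k, Measurable (keyBlockData X Y k)) (i : ℕ) :
    Measurable fun ω ↦ selfishThenHonest (X (i + 1) ω, X (i + 2) ω) :=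
  measurable_selfishThenHonest.comp ((hmeas (.inl i)).prodMk (hmeas (.inl (i + 1))))

lemma indepFun_selfishThenHonest (hmeas : ∀ k, Measurable (keyBlockData X Y k))
    (hindep : iIndepFun (keyBlockData X Y) P) (i : ℕ) :
    IndepFun (fun ω ↦ selfishThenHonest (X (i + 1) ω, X (i + 2) ω)) (Y (i + 1)) P :=
  (hindep.indepFun_prodMk hmeas (.inl i) (.inl (i + 1)) (.inr i) (by simp) (by simp)).comp
    measurable_selfishThenHonest measurable_id

lemma indepFun_withheldEpochLength (hmeas : ∀ k, Measurable (keyBlockData X Y k))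
    (hindep : iIndepFun (keyBlockData X Y) P) {i j : ℕ} (hij : i + 2 ≤ j) :
    IndepFun (withheldEpochLength X Y i) (withheldEpochLength X Y j) P := by
  have hd : Disjoint ({.inl i, .inl (i + 1), .inr i} : Finset (ℕ ⊕ ℕ))
      {.inl j, .inl (j + 1), .inr j} := by
    simp only [disjoint_left, mem_insert, mem_singleton, not_or, forall_eq_or_imp, Sum.inl.injEq,
      reduceCtorEq, not_false_eq_true, and_true, Nat.add_right_cancel_iff, forall_eq,
      Sum.inr.injEq, true_and, and_self_right]
    omega
  have hψ : Measurable fun x : ℝ × ℝ × ℝ ↦ selfishThenHonest (x.1, x.2.1) * x.2.2 := by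
    fun_prop
  exact (hindep.indepFun_prodMk₃_prodMk₃ hmeas hd).comp hψ hψ

lemma identDistrib_withheldEpochLength [IsProbabilityMeasure P] {p q : ENNReal} {ν : Measure ℝ}
    (hmeas : ∀ k, Measurable (keyBlockData X Y k)) (hindep : iIndepFun (keyBlockData X Y) P)
    (h1 : ∀ i, 1 ≤ i → P {ω | X i ω = 1} = p) (h0 : ∀ i, 1 ≤ i → P {ω | X i ω = 0} = q)
    (hY : ∀ i, HasLaw (Y (i + 1)) ν P) (i : ℕ) :
    IdentDistrib (withheldEpochLength X Y i) (withheldEpochLength X Y 0) P P := by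
  have hS_ident : IdentDistrib (fun ω ↦ selfishThenHonest (X (i + 1) ω, X (i + 2) ω))
      (fun ω ↦ selfishThenHonest (X (0 + 1) ω, X (0 + 2) ω)) P P := by
    refine identDistrib_of_ae_eq_zero_or_one
      (measurable_selfishThenHonest_comp hmeas i).aemeasurable
      (measurable_selfishThenHonest_comp hmeas 0).aemeasurable
      (ae_of_all _ fun _ ↦ selfishThenHonest_eq_zero_or_one _)
      (ae_of_all _ fun _ ↦ selfishThenHonest_eq_zero_or_one _) ?_
    rw [measure_selfishThenHonest_eq_one hindep, measure_selfishThenHonest_eq_one hindep,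
      h1 _ (by omega), h1 _ (by omega), h0 _ (by omega), h0 _ (by omega)]
  exact (hS_ident.prodMk ((hY i).identDistrib (hY 0)) (indepFun_selfishThenHonest hmeas hindep i)
    (indepFun_selfishThenHonest hmeas hindep 0)).comp (measurable_fst.mul measurable_snd)

lemma integral_withheldEpochLength (hmeas : ∀ k, Measurable (keyBlockData X Y k))
    (hindep : iIndepFun (keyBlockData X Y) P) :
    ∫ ω, withheldEpochLength X Y 0 ω ∂P =
      (P {ω | X 1 ω = 1}).toReal * (P {ω | X 2 ω = 0}).toReal * ∫ ω, Y 1 ω ∂P := by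
  have hS := measurable_selfishThenHonest_comp hmeas 0
  rw [show withheldEpochLength X Y 0 = (fun ω ↦ selfishThenHonest (X 1 ω, X 2 ω)) * Y 1 from rfl,
    (indepFun_selfishThenHonest hmeas hindep 0).integral_mul_eq_mul_integral
      hS.aestronglyMeasurable (hmeas (.inr 0)).aestronglyMeasurable,
    integral_of_ae_eq_zero_or_one hS.aemeasurable
      (ae_of_all _ fun _ ↦ selfishThenHonest_eq_zero_or_one _), measureReal_def,
    measure_selfishThenHonest_eq_one hindep 0, ENNReal.toReal_mul]

lemma ae_tendsto_average_withheldEpochLength [IsProbabilityMeasure P] {α β f : ℝ} (hα : 0 ≤ α)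
    (hβ : 0 ≤ β) (hf : 0 < f) (hmeas : ∀ k, Measurable (keyBlockData X Y k))
    (hindep : iIndepFun (keyBlockData X Y) P)
    (h1 : ∀ i, 1 ≤ i → P {ω | X i ω = 1} = ENNReal.ofReal α)
    (h0 : ∀ i, 1 ≤ i → P {ω | X i ω = 0} = ENNReal.ofReal β)
    (hY : ∀ i, HasLaw (Y (i + 1)) (expMeasure f) P) :
    ∀ᵐ ω ∂P, Tendsto (fun n : ℕ ↦ (∑ i ∈ range n, withheldEpochLength X Y i ω) / n) atTop
      (𝓝 (α * β * f⁻¹)) := by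
  have hint : Integrable (withheldEpochLength X Y 0) P :=
    (((hY 0).identDistrib HasLaw.id).integrable_iff.2 (integrable_id_expMeasure hf)).bdd_mul
      (measurable_selfishThenHonest_comp hmeas 0).aestronglyMeasurable (c := 1) <|
      ae_of_all _ fun ω ↦ by
        rcases selfishThenHonest_eq_zero_or_one (X 1 ω, X 2 ω) with h | h <;> simp [h]
  have h := strong_law_ae_of_indepFun_of_add_two_le _ hint
    (fun _ _ ↦ indepFun_withheldEpochLength hmeas hindep)
    (identDistrib_withheldEpochLength hmeas hindep h1 h0 hY)
  rwa [integral_withheldEpochLength hmeas hindep, h1 1 le_rfl, h0 2 (by omega),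
    ENNReal.toReal_ofReal hα, ENNReal.toReal_ofReal hβ, (hY 0).integral_eq,
    integral_id_expMeasure hf] at h

lemma ae_tendsto_average_interval {f : ℝ} (hf : 0 < f)
    (hindep : iIndepFun (keyBlockData X Y) P) (hY : ∀ i, HasLaw (Y (i + 1)) (expMeasure f) P) :
    ∀ᵐ ω ∂P, Tendsto (fun n : ℕ ↦ (∑ i ∈ range n, Y (i + 1) ω) / n) atTop (𝓝 f⁻¹) := by
  have h := strong_law_ae_real (fun i ↦ Y (i + 1))
    (((hY 0).identDistrib HasLaw.id).integrable_iff.2 (integrable_id_expMeasure hf))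
    (fun i j hij ↦ hindep.indepFun (i := .inr i) (j := .inr j) (by simpa using hij))
    (fun i ↦ (hY i).identDistrib (hY 0))
  rwa [(hY 0).integral_eq, integral_id_expMeasure hf] at h

end KeyBlocks

theorem stmt5_general {Ω : Type*} [MeasurableSpace Ω] (P : Measure Ω) [IsProbabilityMeasure P]
    (α β f r ρ v Rt : ℝ) (hα0 : 0 < α) (hα1 : α < 1) (hβ : β = 1 - α) (hf : 0 < f)
    (hv : 0 < v) (hRt : 0 < Rt) (hαβρ : α * β * ρ < 1)
    (X Y : ℕ → Ω → ℝ) (hXmeas : ∀ i, Measurable (X i)) (hYmeas : ∀ i, Measurable (Y i))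
    (hindep : iIndepFun
      (Sum.elim (fun i : ℕ => X (i + 1)) (fun i : ℕ => Y (i + 1))) P)
    (h1 : ∀ i, 1 ≤ i → P {ω | X i ω = 1} = ENNReal.ofReal α)
    (h0 : ∀ i, 1 ≤ i → P {ω | X i ω = 0} = ENNReal.ofReal β)
    (hY : ∀ i, 1 ≤ i → P.map (Y i) = expMeasure f)
    (Z : ℕ → Ω → ℝ)
    (hZ : ∀ i ω, Z i ω = if X i ω = 1 ∧ X (i + 1) ω = 0 then (1 : ℝ) else 0)
    (u : ℕ → Ω → ℝ)
    (hu : ∀ m ω, u m ω =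
      (∑ i ∈ Finset.Icc 1 (m - 1), (α * v * Y i ω * Rt - r * ρ * v * Z i ω * Y i ω * Rt)) /
      (∑ i ∈ Finset.Icc 1 (m - 1), (v * Y i ω * Rt - ρ * v * Z i ω * Y i ω * Rt))) :
    ∀ᵐ ω ∂P, Tendsto (fun m : ℕ => u m ω) atTop
      (nhds ((α - r * α * β * ρ) / (1 - α * β * ρ))) := by
  have hmeas : ∀ k, Measurable (keyBlockData X Y k) :=
    Sum.forall.2 ⟨fun _ ↦ hXmeas _, fun _ ↦ hYmeas _⟩
  have hYlaw (i : ℕ) : HasLaw (Y (i + 1)) (expMeasure f) P :=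
    ⟨(hYmeas _).aemeasurable, hY _ (by omega)⟩
  filter_upwards [ae_tendsto_average_interval hf hindep hYlaw,
    ae_tendsto_average_withheldEpochLength hα0.le (by linarith) hf hmeas hindep h1 h0 hYlaw]
    with ω hYω hWω
  have hZY (k : ℕ) : Z (k + 1) ω * Y (k + 1) ω = withheldEpochLength X Y k ω := by
    rw [hZ]
    rfl
  have hden : v * Rt * f⁻¹ - ρ * v * Rt * (α * β * f⁻¹) ≠ 0 := by
    rw [show v * Rt * f⁻¹ - ρ * v * Rt * (α * β * f⁻¹) = v * Rt * f⁻¹ * (1 - α * β * ρ) by ring]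
    exact mul_ne_zero (by positivity) (sub_ne_zero.2 hαβρ.ne')
  have hlim := (tendsto_sum_div_sum_of_tendsto_average
    (tendsto_average_linearCombination hYω hWω (α * v * Rt) (r * ρ * v * Rt))
    (tendsto_average_linearCombination hYω hWω (v * Rt) (ρ * v * Rt)) hden).comp
    (tendsto_sub_atTop_nat 1)
  convert hlim using 2 with m
  · rw [hu, Function.comp_apply, sum_Icc_one_eq_sum_range, sum_Icc_one_eq_sum_range]
    congr 1 <;> refine sum_congr rfl fun k _ ↦ ?_ <;> rw [← hZY] <;> ring
  · field_simp

/-- Lemma 2 of the paper (transaction inclusion attack): with i.i.d. key-block indicators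
`(X i)_{i ≥ 1}` (`P(X i = 1) = α`, `P(X i = 0) = β = 1-α`), pair indicators
`Z i = 1_{(X i, X (i+1)) = (1,0)}`, and i.i.d. exponential inter-block times `(Y i)_{i ≥ 1}`
of rate `f` independent of the `X`'s, the selfish miner's relative revenue
`u_m = Σ(αvY_iR_t - rρvZ_iY_iR_t) / Σ(vY_iR_t - ρvZ_iY_iR_t)` converges a.s. to
`(α - rαβρ)/(1 - αβρ)`. -/
theorem stmt5 {Ω : Type*} [MeasurableSpace Ω] (P : Measure Ω) [IsProbabilityMeasure P]
    (α β f r ρ v Rt : ℝ) (hα0 : 0 < α) (hα1 : α < 1) (hβ : β = 1 - α) (hf : 0 < f)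
    (hr0 : 0 ≤ r) (hr1 : r ≤ 1) (hρ0 : 0 ≤ ρ) (hρ1 : ρ ≤ 1)
    (hv : 0 < v) (hRt : 0 < Rt) (hαβρ : α * β * ρ < 1)
    (X Y : ℕ → Ω → ℝ) (hXmeas : ∀ i, Measurable (X i)) (hYmeas : ∀ i, Measurable (Y i))
    (hindep : iIndepFun
      (Sum.elim (fun i : ℕ => X (i + 1)) (fun i : ℕ => Y (i + 1))) P)
    (h1 : ∀ i, 1 ≤ i → P {ω | X i ω = 1} = ENNReal.ofReal α)
    (h0 : ∀ i, 1 ≤ i → P {ω | X i ω = 0} = ENNReal.ofReal β)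
    (hY : ∀ i, 1 ≤ i → P.map (Y i) = expMeasure f)
    (Z : ℕ → Ω → ℝ)
    (hZ : ∀ i ω, Z i ω = if X i ω = 1 ∧ X (i + 1) ω = 0 then (1 : ℝ) else 0)
    (u : ℕ → Ω → ℝ)
    (hu : ∀ m ω, u m ω =
      (∑ i ∈ Finset.Icc 1 (m - 1), (α * v * Y i ω * Rt - r * ρ * v * Z i ω * Y i ω * Rt)) /
      (∑ i ∈ Finset.Icc 1 (m - 1), (v * Y i ω * Rt - ρ * v * Z i ω * Y i ω * Rt))) :
    ∀ᵐ ω ∂P, Tendsto (fun m : ℕ => u m ω) atTop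
      (nhds ((α - r * α * β * ρ) / (1 - α * β * ρ))) :=
  stmt5_general P α β f r ρ v Rt hα0 hα1 hβ hf hv hRt hαβρ X Y hXmeas hYmeas hindep h1 h0 hY Z hZ u
    hu
end

section
/- Let α ∈ (0,1), β = 1−α, and let r satisfy α ≤ r ≤ 1. Define g(ρ) = (α − r α β ρ) / (1 − α β ρ) for ρ ∈ [0,1] (note 0 < αβ ≤ 1/4 so the denominator is positive). Then g(ρ) ≤ α for every ρ ∈ [0,1], with g(0) = α; hence max_{ρ ∈ [0,1]} g(ρ) = α, attained at ρ = 0. -/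
open Set

/-! Since `αβ = α(1 - α) ≤ 1/4`, the denominator `1 - αβρ` of `g(ρ)` is positive on `[0, 1]`,
and clearing it turns `g(ρ) ≤ α` into `αβρ (r - α) ≥ 0`. -/

noncomputable def inclusionAttackRevenue (α β r ρ : ℝ) : ℝ :=
  (α - r * α * β * ρ) / (1 - α * β * ρ)

lemma mul_one_sub_self_le_quarter (a : ℝ) : a * (1 - a) ≤ 1 / 4 := by
  nlinarith [sq_nonneg (a - 1 / 2)]

lemma one_sub_mul_pos_of_mem_Icc {c ρ : ℝ} (hc : c < 1) (hρ : ρ ∈ Icc (0 : ℝ) 1) :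
    0 < 1 - c * ρ := by
  nlinarith [mul_nonneg hρ.1 (sub_nonneg.2 hc.le), hρ.2]

lemma inclusionAttackRevenue_zero (α β r : ℝ) : inclusionAttackRevenue α β r 0 = α := by
  simp [inclusionAttackRevenue]

lemma inclusionAttackRevenue_le {α β r ρ : ℝ} (hαβ : 0 ≤ α * β) (hρ : 0 ≤ ρ)
    (hden : 0 < 1 - α * β * ρ) (hrα : α ≤ r) : inclusionAttackRevenue α β r ρ ≤ α := by
  rw [inclusionAttackRevenue, div_le_iff₀ hden]
  nlinarith [mul_nonneg (mul_nonneg hαβ hρ) (sub_nonneg.2 hrα)]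

theorem stmt7_general (α β r : ℝ) (hα0 : 0 < α) (hα1 : α < 1) (hβ : β = 1 - α)
    (hrα : α ≤ r) :
    (∀ ρ ∈ Icc (0:ℝ) 1, (α - r * α * β * ρ) / (1 - α * β * ρ) ≤ α) ∧
    (α - r * α * β * 0) / (1 - α * β * 0) = α ∧
    IsGreatest ((fun ρ => (α - r * α * β * ρ) / (1 - α * β * ρ)) '' Icc (0:ℝ) 1) α := by
  subst hβ
  have hαβ_lt_one : α * (1 - α) < 1 := (mul_one_sub_self_le_quarter α).trans_lt (by norm_num)
  have hle : ∀ ρ ∈ Icc (0:ℝ) 1, inclusionAttackRevenue α (1 - α) r ρ ≤ α := fun ρ hρ =>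
    inclusionAttackRevenue_le (mul_nonneg hα0.le (sub_nonneg.2 hα1.le)) hρ.1
      (one_sub_mul_pos_of_mem_Icc hαβ_lt_one hρ) hrα
  exact ⟨hle, inclusionAttackRevenue_zero _ _ _,
    ⟨0, left_mem_Icc.2 zero_le_one, inclusionAttackRevenue_zero _ _ _⟩, forall_mem_image.2 hle⟩

/-- Transaction inclusion attack, case `α ≤ r ≤ 1`: honest behavior `ρ = 0` is optimal
and the selfish miner's limiting relative revenue never exceeds its fair share `α`. -/
theorem stmt7 (α β r : ℝ) (hα0 : 0 < α) (hα1 : α < 1) (hβ : β = 1 - α)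
    (hrα : α ≤ r) (hr1 : r ≤ 1) :
    (∀ ρ ∈ Icc (0:ℝ) 1, (α - r * α * β * ρ) / (1 - α * β * ρ) ≤ α) ∧
    (α - r * α * β * 0) / (1 - α * β * 0) = α ∧
    IsGreatest ((fun ρ => (α - r * α * β * ρ) / (1 - α * β * ρ)) '' Icc (0:ℝ) 1) α :=
  stmt7_general α β r hα0 hα1 hβ hrα
end

section
/- Let α ∈ (0,1), β = 1−α, and let r satisfy 0 ≤ r ≤ α. Define g(ρ) = (α − r α β ρ) / (1 − α β ρ) for ρ ∈ [0,1]. Then max_{ρ ∈ [0,1]} g(ρ) = g(1) = r + (α − r)/(1 − α β); moreover, if r < α then g(1) > α. -/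
open Set

/-!
Writing `c = αβ`, the revenue is `g(ρ) = r + (α - r) / (1 - cρ)`. Since `0 < c < 1` and
`r ≤ α`, the denominator `1 - cρ` is positive and decreasing in `ρ`, so `g` is monotone on
`[0, 1]` and peaks at `ρ = 1`; when `r < α` the factor `1 / (1 - c) > 1` lifts `g(1)` above `α`.
-/

lemma sub_mul_div_one_sub_mul (x r c ρ : ℝ) (h : 1 - c * ρ ≠ 0) :
    (x - r * c * ρ) / (1 - c * ρ) = r + (x - r) / (1 - c * ρ) := by
  field_simp
  ring

lemma monotoneOn_sub_mul_div_one_sub_mul {x r c : ℝ} (hrx : r ≤ x) (hc0 : 0 ≤ c) (hc1 : c < 1) :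
    MonotoneOn (fun ρ => (x - r * c * ρ) / (1 - c * ρ)) (Icc 0 1) := by
  have hpos : ∀ ρ ∈ Icc (0 : ℝ) 1, 0 < 1 - c * ρ := fun ρ hρ => by
    nlinarith [mul_le_mul_of_nonneg_left hρ.2 hc0]
  intro ρ hρ σ hσ hρσ
  dsimp only
  rw [sub_mul_div_one_sub_mul _ _ _ _ (hpos ρ hρ).ne',
    sub_mul_div_one_sub_mul _ _ _ _ (hpos σ hσ).ne']
  have hσpos := hpos σ hσ
  gcongr

lemma lt_add_div_one_sub {x r c : ℝ} (hrx : r < x) (hc0 : 0 < c) (hc1 : c < 1) :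
    x < r + (x - r) / (1 - c) := by
  have : x - r < (x - r) / (1 - c) := by
    rw [lt_div_iff₀ (by linarith)]
    nlinarith
  linarith

lemma mul_one_sub_mem_Ioo {α : ℝ} (hα0 : 0 < α) (hα1 : α < 1) : α * (1 - α) ∈ Ioo 0 1 :=
  ⟨mul_pos hα0 (by linarith), by nlinarith⟩

theorem stmt8_general (α β r : ℝ) (hα0 : 0 < α) (hα1 : α < 1) (hβ : β = 1 - α)
    (hrα : r ≤ α) :
    IsGreatest ((fun ρ => (α - r * α * β * ρ) / (1 - α * β * ρ)) '' Icc (0:ℝ) 1)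
      ((α - r * α * β * 1) / (1 - α * β * 1)) ∧
    (α - r * α * β * 1) / (1 - α * β * 1) = r + (α - r) / (1 - α * β) ∧
    (r < α → α < (α - r * α * β * 1) / (1 - α * β * 1)) := by
  obtain ⟨hc0, hc1⟩ : 0 < α * β ∧ α * β < 1 := hβ ▸ mul_one_sub_mem_Ioo hα0 hα1
  simp_rw [mul_assoc r α β]
  have hvalue : (α - r * (α * β) * 1) / (1 - α * β * 1) = r + (α - r) / (1 - α * β) := by
    rw [sub_mul_div_one_sub_mul _ _ _ _ (by linarith), mul_one]
  refine ⟨?_, hvalue, fun hr => hvalue ▸ lt_add_div_one_sub hr hc0 hc1⟩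
  exact (monotoneOn_sub_mul_div_one_sub_mul hrα hc0.le hc1).map_isGreatest
    (isGreatest_Icc zero_le_one)

/-- Transaction inclusion attack, case `0 ≤ r ≤ α`: withholding all microblocks `ρ = 1`
is optimal, has value `r + (α - r)/(1 - αβ)`, and strictly exceeds `α` when `r < α`. -/
theorem stmt8 (α β r : ℝ) (hα0 : 0 < α) (hα1 : α < 1) (hβ : β = 1 - α)
    (hr0 : 0 ≤ r) (hrα : r ≤ α) :
    IsGreatest ((fun ρ => (α - r * α * β * ρ) / (1 - α * β * ρ)) '' Icc (0:ℝ) 1)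
      ((α - r * α * β * 1) / (1 - α * β * 1)) ∧
    (α - r * α * β * 1) / (1 - α * β * 1) = r + (α - r) / (1 - α * β) ∧
    (r < α → α < (α - r * α * β * 1) / (1 - α * β * 1)) :=
  stmt8_general α β r hα0 hα1 hβ hrα
end

section
/- Let α ∈ (0,1), β = 1−α, and let r satisfy 0 ≤ r ≤ β. Define h(ρ) = (α − (1−r) α β ρ) / (1 − α β ρ) for ρ ∈ [0,1]. Then h(ρ) ≤ α for every ρ ∈ [0,1], with h(0) = α; hence max_{ρ ∈ [0,1]} h(ρ) = α, attained at ρ = 0. -/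
/-!
Since `0 < α, β < 1` and `ρ ≤ 1`, the denominator `1 - αβρ` is positive; clearing it,
`h(ρ) ≤ α` becomes `α · αβρ ≤ (1 - r) αβρ`, which holds because `α ≤ 1 - r` is exactly `r ≤ β`.
-/

open Set

theorem div_one_sub_mul_le_self {a c d ρ : ℝ} (hden : 0 < 1 - d * ρ) (hρ : 0 ≤ ρ)
    (hcd : a * d ≤ c) : (a - c * ρ) / (1 - d * ρ) ≤ a := by
  rw [div_le_iff₀ hden]
  have : a * d * ρ ≤ c * ρ := mul_le_mul_of_nonneg_right hcd hρ
  linarith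

theorem stmt9_general (α β r : ℝ) (hα0 : 0 < α) (hα1 : α < 1) (hβ : β = 1 - α)
    (hrβ : r ≤ β) :
    (∀ ρ ∈ Icc (0:ℝ) 1, (α - (1 - r) * α * β * ρ) / (1 - α * β * ρ) ≤ α) ∧
    (α - (1 - r) * α * β * 0) / (1 - α * β * 0) = α ∧
    IsGreatest ((fun ρ => (α - (1 - r) * α * β * ρ) / (1 - α * β * ρ)) '' Icc (0:ℝ) 1) α := by
  have hαβ0 : 0 ≤ α * β := mul_nonneg hα0.le (by linarith)
  have hαβ : α * β < 1 := mul_lt_one_of_nonneg_of_lt_one_left hα0.le hα1 (by linarith)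
  have bound : ∀ ρ ∈ Icc (0:ℝ) 1, (α - (1 - r) * α * β * ρ) / (1 - α * β * ρ) ≤ α := by
    rintro ρ ⟨hρ0, hρ1⟩
    have hden : 0 < 1 - α * β * ρ := by
      linarith [mul_le_of_le_one_right hαβ0 hρ1]
    refine div_one_sub_mul_le_self hden hρ0 ?_
    calc α * (α * β) ≤ (1 - r) * (α * β) :=
          mul_le_mul_of_nonneg_right (by linarith) hαβ0
      _ = (1 - r) * α * β := by ring
  have at_zero : (α - (1 - r) * α * β * 0) / (1 - α * β * 0) = α := by simp
  exact ⟨bound, at_zero, ⟨0, left_mem_Icc.2 zero_le_one, at_zero⟩,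
    forall_mem_image.2 bound⟩

/-- Longest chain extension attack, case `0 ≤ r ≤ β`: honest behavior `ρ = 0` is optimal
and the selfish miner's limiting relative revenue never exceeds its fair share `α`. -/
theorem stmt9 (α β r : ℝ) (hα0 : 0 < α) (hα1 : α < 1) (hβ : β = 1 - α)
    (hr0 : 0 ≤ r) (hrβ : r ≤ β) :
    (∀ ρ ∈ Icc (0:ℝ) 1, (α - (1 - r) * α * β * ρ) / (1 - α * β * ρ) ≤ α) ∧
    (α - (1 - r) * α * β * 0) / (1 - α * β * 0) = α ∧
    IsGreatest ((fun ρ => (α - (1 - r) * α * β * ρ) / (1 - α * β * ρ)) '' Icc (0:ℝ) 1) α :=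
  stmt9_general α β r hα0 hα1 hβ hrβ
end

section
/- Let α ∈ (0,1), β = 1−α, and let r satisfy β ≤ r ≤ 1. Define h(ρ) = (α − (1−r) α β ρ) / (1 − α β ρ) for ρ ∈ [0,1]. Then max_{ρ ∈ [0,1]} h(ρ) = h(1) = 1 − r + (r − β)/(1 − α β); moreover, if r > β then h(1) > α. -/
/-!
Since `α - (1 - r) = r - β`, the revenue rewrites as `h ρ = 1 - r + (r - β) / (1 - α β ρ)`.
For `r ≥ β` the numerator `r - β` is nonnegative while the denominator `1 - α β ρ` decreases
in `ρ` and stays positive (as `0 < α β < 1`), so `h` is increasing and peaks at `ρ = 1`.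
When `r > β`, dividing `r - β > 0` by `1 - α β < 1` strictly increases it, so
`h 1 > 1 - r + (r - β) = α`.
-/

open Set

lemma div_one_sub_eq_add_div {c : ℝ} (hc : c ≠ 1) (a b : ℝ) :
    (a - b * c) / (1 - c) = b + (a - b) / (1 - c) := by
  have : 1 - c ≠ 0 := sub_ne_zero.2 hc.symm
  field_simp
  ring

lemma monotoneOn_div_one_sub_mul {d k : ℝ} (hd : 0 ≤ d) (hk0 : 0 ≤ k) (hk1 : k < 1) :
    MonotoneOn (fun ρ => d / (1 - k * ρ)) (Iic 1) := by
  intro x _ y (hy : y ≤ 1) hxy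
  have hky : k * y < 1 := by nlinarith
  exact div_le_div_of_nonneg_left hd (by linarith) (by nlinarith)

lemma lt_div_one_sub {d k : ℝ} (hd : 0 < d) (hk0 : 0 < k) (hk1 : k < 1) : d < d / (1 - k) := by
  rw [lt_div_iff₀ (by linarith)]
  nlinarith

theorem stmt10_general (α β r : ℝ) (hα0 : 0 < α) (hα1 : α < 1) (hβ : β = 1 - α)
    (hrβ : β ≤ r) :
    IsGreatest ((fun ρ => (α - (1 - r) * α * β * ρ) / (1 - α * β * ρ)) '' Icc (0:ℝ) 1)
      ((α - (1 - r) * α * β * 1) / (1 - α * β * 1)) ∧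
    (α - (1 - r) * α * β * 1) / (1 - α * β * 1) = 1 - r + (r - β) / (1 - α * β) ∧
    (β < r → α < (α - (1 - r) * α * β * 1) / (1 - α * β * 1)) := by
  have hαβ0 : 0 < α * β := mul_pos hα0 (by linarith)
  have hαβ1 : α * β < 1 := by nlinarith
  have hrevenue : EqOn (fun ρ => 1 - r + (r - β) / (1 - α * β * ρ))
      (fun ρ => (α - (1 - r) * α * β * ρ) / (1 - α * β * ρ)) (Iic 1) := by
    intro ρ (hρ : ρ ≤ 1)
    have hc : α * β * ρ ≠ 1 := by nlinarith
    dsimp only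
    rw [show (1 - r) * α * β * ρ = (1 - r) * (α * β * ρ) by ring, div_one_sub_eq_add_div hc,
      show α - (1 - r) = r - β by linarith]
  have hmono : MonotoneOn (fun ρ => (α - (1 - r) * α * β * ρ) / (1 - α * β * ρ)) (Iic 1) :=
    ((monotoneOn_div_one_sub_mul (sub_nonneg.2 hrβ) hαβ0.le hαβ1).const_add (1 - r)).congr hrevenue
  have hvalue := (hrevenue self_mem_Iic).symm
  simp only [mul_one] at hvalue ⊢
  refine ⟨?_, hvalue, fun hlt => ?_⟩
  · simpa using (hmono.mono Icc_subset_Iic_self).map_isGreatest (isGreatest_Icc zero_le_one)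
  · rw [hvalue]
    linarith [lt_div_one_sub (sub_pos.2 hlt) hαβ0 hαβ1]

/-- Longest chain extension attack, case `β ≤ r ≤ 1`: rejecting all honest microblocks
`ρ = 1` is optimal, has value `1 - r + (r - β)/(1 - αβ)`, and strictly exceeds `α`
when `r > β`. -/
theorem stmt10 (α β r : ℝ) (hα0 : 0 < α) (hα1 : α < 1) (hβ : β = 1 - α)
    (hrβ : β ≤ r) (hr1 : r ≤ 1) :
    IsGreatest ((fun ρ => (α - (1 - r) * α * β * ρ) / (1 - α * β * ρ)) '' Icc (0:ℝ) 1)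
      ((α - (1 - r) * α * β * 1) / (1 - α * β * 1)) ∧
    (α - (1 - r) * α * β * 1) / (1 - α * β * 1) = 1 - r + (r - β) / (1 - α * β) ∧
    (β < r → α < (α - (1 - r) * α * β * 1) / (1 - α * β * 1)) :=
  stmt10_general α β r hα0 hα1 hβ hrβ
end

section
/- Let α ∈ (0,1), β = 1−α, and suppose the fee-split ratio r satisfies α < r < β. Then for every ρ ∈ [0,1], both (α − r α β ρ)/(1 − α β ρ) ≤ α and (α − (1−r) α β ρ)/(1 − α β ρ) ≤ α, with equality in each exactly when ρ = 0. In particular, under the condition α < r < 1 − α, the selfish miner's limiting relative revenue from both the transaction inclusion attack and the longest chain extension attack is maximized by honest behavior (ρ = 0) and equals the fair share α. -/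
open Set

/-
Writing x = αβρ, both revenues have the form (α - c x)/(1 - x) with c = r or c = 1 - r.
Since 0 ≤ x < 1, this is at most α exactly when α x ≤ c x, and equals α exactly when
(c - α) x = 0. The condition α < r < 1 - α gives c > α in both cases, and x = 0 iff ρ = 0.
-/

section

variable {a c x : ℝ}

lemma div_one_sub_le_self (hac : a ≤ c) (hx0 : 0 ≤ x) (hx1 : x < 1) :
    (a - c * x) / (1 - x) ≤ a := by
  rw [div_le_iff₀ (sub_pos.mpr hx1)]
  nlinarith [mul_le_mul_of_nonneg_right hac hx0]

lemma div_one_sub_eq_self_iff (hac : a ≠ c) (hx1 : x ≠ 1) :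
    (a - c * x) / (1 - x) = a ↔ x = 0 := by
  rw [div_eq_iff (sub_ne_zero.mpr hx1.symm)]
  constructor
  · intro h
    have hprod : (c - a) * x = 0 := by linear_combination -h
    exact (mul_eq_zero.mp hprod).resolve_left (sub_ne_zero.mpr hac.symm)
  · rintro rfl
    ring

end

lemma mul_one_sub_mul_lt_one (α ρ : ℝ) (hρ0 : 0 ≤ ρ) (hρ1 : ρ ≤ 1) :
    α * (1 - α) * ρ < 1 := by
  have hquarter : α * (1 - α) ≤ 1 / 4 := by nlinarith [sq_nonneg (2 * α - 1)]
  nlinarith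

theorem stmt11_general (α β r : ℝ) (hα0 : 0 < α) (hβ : β = 1 - α)
    (hrα : α < r) (hrβ : r < β) :
    ∀ ρ ∈ Icc (0:ℝ) 1,
      ((α - r * α * β * ρ) / (1 - α * β * ρ) ≤ α ∧
        (α - (1 - r) * α * β * ρ) / (1 - α * β * ρ) ≤ α) ∧
      ((α - r * α * β * ρ) / (1 - α * β * ρ) = α ↔ ρ = 0) ∧
      ((α - (1 - r) * α * β * ρ) / (1 - α * β * ρ) = α ↔ ρ = 0) := by
  rintro ρ ⟨hρ0, hρ1⟩
  have hβ0 : 0 < β := by linarith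
  have hx0 : 0 ≤ α * β * ρ := by positivity
  have hx1 : α * β * ρ < 1 := hβ ▸ mul_one_sub_mul_lt_one α ρ hρ0 hρ1
  have hx : α * β * ρ = 0 ↔ ρ = 0 := by simp [hα0.ne', hβ0.ne']
  have revenue (c : ℝ) (hc : α < c) :
      (α - c * α * β * ρ) / (1 - α * β * ρ) ≤ α ∧
        ((α - c * α * β * ρ) / (1 - α * β * ρ) = α ↔ ρ = 0) := by
    rw [show c * α * β * ρ = c * (α * β * ρ) by ring, ← hx]
    exact ⟨div_one_sub_le_self hc.le hx0 hx1, div_one_sub_eq_self_iff hc.ne hx1.ne⟩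
  obtain ⟨hle₁, heq₁⟩ := revenue r hrα
  obtain ⟨hle₂, heq₂⟩ := revenue (1 - r) (by linarith)
  exact ⟨⟨hle₁, hle₂⟩, heq₁, heq₂⟩

/-- Incentive compatibility of Bitcoin-NG for regular transactions: if the fee-split ratio
satisfies `α < r < β`, then both the transaction inclusion attack and the longest chain
extension attack give relative revenue at most the fair share `α`, with equality exactly
for honest behavior `ρ = 0`. -/
theorem stmt11 (α β r : ℝ) (hα0 : 0 < α) (hα1 : α < 1) (hβ : β = 1 - α)
    (hrα : α < r) (hrβ : r < β) :
    ∀ ρ ∈ Icc (0:ℝ) 1,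
      ((α - r * α * β * ρ) / (1 - α * β * ρ) ≤ α ∧
        (α - (1 - r) * α * β * ρ) / (1 - α * β * ρ) ≤ α) ∧
      ((α - r * α * β * ρ) / (1 - α * β * ρ) = α ↔ ρ = 0) ∧
      ((α - (1 - r) * α * β * ρ) / (1 - α * β * ρ) = α ↔ ρ = 0) :=
  stmt11_general α β r hα0 hβ hrα hrβ
end

section
/- Let α ∈ (0,1). The open interval ( α/(1−α), (1−α)/(2−α) ) is nonempty, i.e. α/(1−α) < (1−α)/(2−α), if and only if α < 1 − √2/2 (≈ 0.2929). -/
/-! Cross-multiplying by the positive denominators turns the inequality into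
`0 < 2α² - 4α + 1 = 2 (1 - √2/2 - α) (1 + √2/2 - α)`; for `α < 1` the second factor is
positive, so the sign is decided by the smaller root `1 - √2/2`. -/

namespace BitcoinNG

theorem div_one_sub_lt_one_sub_div_two_sub_iff {α : ℝ} (hα : α < 1) :
    α / (1 - α) < (1 - α) / (2 - α) ↔ 0 < 2 * α ^ 2 - 4 * α + 1 := by
  rw [div_lt_div_iff₀ (by linarith) (by linarith)]
  constructor <;> intro h <;> linarith

theorem two_mul_sq_sub_four_mul_add_one_eq (α : ℝ) :
    2 * α ^ 2 - 4 * α + 1 = 2 * (1 - √2 / 2 - α) * (1 + √2 / 2 - α) := by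
  have hsq : √2 ^ 2 = 2 := Real.sq_sqrt zero_le_two
  linear_combination (1 / 2 : ℝ) * hsq

theorem two_mul_sq_sub_four_mul_add_one_pos_iff {α : ℝ} (hα : α < 1 + √2 / 2) :
    0 < 2 * α ^ 2 - 4 * α + 1 ↔ α < 1 - √2 / 2 := by
  rw [two_mul_sq_sub_four_mul_add_one_eq, mul_pos_iff_of_pos_right (sub_pos.2 hα)]
  constructor <;> intro h <;> linarith

end BitcoinNG

open BitcoinNG in
theorem stmt14_general (α : ℝ) (hα1 : α < 1) :
    α / (1 - α) < (1 - α) / (2 - α) ↔ α < 1 - Real.sqrt 2 / 2 := by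
  have hα : α < 1 + √2 / 2 := by linarith [Real.sqrt_nonneg 2]
  rw [div_one_sub_lt_one_sub_div_two_sub_iff hα1, two_mul_sq_sub_four_mul_add_one_pos_iff hα]

/-- The interval `(α/(1-α), (1-α)/(2-α))` of valid fee-split ratios (Yin et al.'s
refined analysis) is nonempty iff `α < 1 - √2/2 ≈ 0.2929`. -/
theorem stmt14 (α : ℝ) (hα0 : 0 < α) (hα1 : α < 1) :
    α / (1 - α) < (1 - α) / (2 - α) ↔ α < 1 - Real.sqrt 2 / 2 :=
  stmt14_general α hα1
end

section
/- Let α ∈ (0,1). The open interval ( α(2−α)/(1+α−α²), (1−α)/(2−α) ) is nonempty, i.e. α(2−α)/(1+α−α²) < (1−α)/(2−α), if and only if α < 1 − √2/2 (≈ 0.2929). -/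
/-!
Clearing the positive denominators `1 + α - α²` and `2 - α`, the inequality becomes
`α (2 - α)² < (1 - α)(1 + α - α²)`, whose two sides differ by `2α² - 4α + 1`. This quadratic has
roots `1 ± √2/2`, and `α < 1` lies below the larger one, so it is positive exactly when
`α < 1 - √2/2`.
-/

open Real

lemma two_mul_sq_sub_four_mul_add_one_eq (a : ℝ) :
    2 * a ^ 2 - 4 * a + 1 = 2 * (1 + √2 / 2 - a) * (1 - √2 / 2 - a) := by
  linear_combination (1 / 2 : ℝ) * sq_sqrt (zero_le_two : (0 : ℝ) ≤ 2)

lemma two_mul_sq_sub_four_mul_add_one_pos_iff {a : ℝ} (ha : a < 1 + √2 / 2) :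
    0 < 2 * a ^ 2 - 4 * a + 1 ↔ a < 1 - √2 / 2 := by
  rw [two_mul_sq_sub_four_mul_add_one_eq, mul_pos_iff_of_pos_left (by linarith), sub_pos]

/-- The interval `(α(2-α)/(1+α-α²), (1-α)/(2-α))` of valid fee-split ratios (original
Bitcoin-NG analysis) is nonempty iff `α < 1 - √2/2 ≈ 0.2929`. -/
theorem stmt15 (α : ℝ) (hα0 : 0 < α) (hα1 : α < 1) :
    α * (2 - α) / (1 + α - α ^ 2) < (1 - α) / (2 - α) ↔ α < 1 - Real.sqrt 2 / 2 := by
  have hden₁ : 0 < 1 + α - α ^ 2 := by nlinarith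
  have hden₂ : 0 < 2 - α := by linarith
  have hroot : α < 1 + √2 / 2 := by linarith [sqrt_nonneg 2]
  have hgap : (1 - α) * (1 + α - α ^ 2) - α * (2 - α) * (2 - α) = 2 * α ^ 2 - 4 * α + 1 := by
    ring
  rw [div_lt_div_iff₀ hden₁ hden₂, ← sub_pos, hgap, two_mul_sq_sub_four_mul_add_one_pos_iff hroot]
end

section
/- For every α with 0 < α ≤ 1/4, the value r = 2/5 satisfies both microblock incentive constraints of the original Bitcoin-NG analysis: α(2−α)/(1+α−α²) < 2/5 < (1−α)/(2−α). Equivalently, for all α ∈ (0, 1/4], 1 − (1−α)/(1+α−α²) < 2/5 and 2/5 < (1−α)/(2−α). -/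
lemma one_sub_div_one_add_sub_sq {α : ℝ} (hd : 1 + α - α ^ 2 ≠ 0) :
    1 - (1 - α) / (1 + α - α ^ 2) = α * (2 - α) / (1 + α - α ^ 2) := by
  field_simp
  ring

lemma one_add_sub_sq_pos {α : ℝ} (h₀ : 0 ≤ α) (h₁ : α ≤ 1) : 0 < 1 + α - α ^ 2 := by
  nlinarith

-- Equivalent to `3α² - 8α + 2 > 0`, whose smaller root `(4 - √10)/3 ≈ 0.279` exceeds `1/4`.
lemma mul_two_sub_div_lt_two_fifths {α : ℝ} (h₀ : 0 ≤ α) (h₁ : α ≤ 1 / 4) :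
    α * (2 - α) / (1 + α - α ^ 2) < 2 / 5 := by
  rw [div_lt_iff₀ (one_add_sub_sq_pos h₀ (by linarith))]
  nlinarith

lemma two_fifths_lt_one_sub_div_two_sub {α : ℝ} (h : α < 1 / 3) :
    2 / 5 < (1 - α) / (2 - α) := by
  rw [lt_div_iff₀ (by linarith)]
  linarith

/-- The choice `r = 2/5 = 40%` made in Bitcoin-NG satisfies both microblock incentive
constraints of the original analysis for every selfish power `α ∈ (0, 1/4]`. -/
theorem stmt17 :
    ∀ α : ℝ, 0 < α → α ≤ 1 / 4 →
      (α * (2 - α) / (1 + α - α ^ 2) < 2 / 5 ∧ 2 / 5 < (1 - α) / (2 - α)) ∧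
      (1 - (1 - α) / (1 + α - α ^ 2) < 2 / 5 ∧ 2 / 5 < (1 - α) / (2 - α)) := by
  intro α hpos hle
  have inclusion := mul_two_sub_div_lt_two_fifths hpos.le hle
  have extension := two_fifths_lt_one_sub_div_two_sub (α := α) (by linarith)
  rw [one_sub_div_one_add_sub_sq (one_add_sub_sq_pos hpos.le (by linarith)).ne']
  exact ⟨⟨inclusion, extension⟩, inclusion, extension⟩
end
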